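/- Let μ be a measure with upper s-parabolic growth of degree n+1 with constant 1, and let Q̂ be an s-parabolic cube with A-small boundary that is (2, 3^{n+2})-doubling. Then (1/μ(Q̂)) ∫_{Q̂} ( ∫_{2Q̂∖Q̂} |x̄−ȳ|_{p_s}^{-(n+1)} dμ(ȳ) ) dμ(x̄) ≤ C(n,s,A). -/

import Mathlib

/-!
Write `Q` for the cube, `d(z)` for the parabolic distance from `z` to `∂Q`, and cut `Q` into the
layers `V_k = {h 2^{-k} < d ≤ 2h 2^{-k}}`. A segment from `z ∈ Q` to `w ∉ Q` crosses `∂Q`, and the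
parabolic distance from `z` decreases along it, so every `w ∈ 2Q \ Q` satisfies
`d(z) ≤ |z - w|_{p_s} ≤ 2h`. Hence for `z ∈ V_k` the inner integral runs over `k + 1` dyadic annuli,
each contributing at most `3^{n+1}` by the growth bound. The small-boundary condition gives
`μ(V_k) ≤ 2A 2^{-k} μ(2Q)` and makes `{d = 0}` null; since `∑ (k+1) 2^{-k} = 4`, the double
integral is at most `8A 3^{n+1} μ(2Q) ≤ 8A 3^{n+1} 3^{n+2} μ(Q)` by doubling.
-/

open MeasureTheory Set
open scoped ENNReal

noncomputable section

/-- The `s`-parabolic distance on `ℝⁿ × ℝ`. -/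
def pdist (n : ℕ) (s : ℝ) (z w : (Fin n → ℝ) × ℝ) : ℝ :=
  max ‖z.1 - w.1‖ (|z.2 - w.2| ^ (1 / (2 * s)))

/-- The `s`-parabolic distance from a point to a set. -/
def pdistToSet (n : ℕ) (s : ℝ) (z : (Fin n → ℝ) × ℝ) (S : Set ((Fin n → ℝ) × ℝ)) : ℝ :=
  sInf ((fun w => pdist n s z w) '' S)

/-- The open `s`-parabolic ball of center `z` and radius `r`. -/
def pBall (n : ℕ) (s : ℝ) (z : (Fin n → ℝ) × ℝ) (r : ℝ) : Set ((Fin n → ℝ) × ℝ) :=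
  {w | pdist n s w z < r}

/-- The closed `s`-parabolic cube with center `c` and side length `h`. -/
def parCubeC (n : ℕ) (s : ℝ) (c : (Fin n → ℝ) × ℝ) (h : ℝ) : Set ((Fin n → ℝ) × ℝ) :=
  {z | (∀ i, |z.1 i - c.1 i| ≤ h / 2) ∧ |z.2 - c.2| ≤ h ^ (2 * s) / 2}

theorem IsPreconnected.inter_frontier_nonempty {X : Type*} [TopologicalSpace X] {s t : Set X}
    (hs : IsPreconnected s) (hst : (s ∩ t).Nonempty) (hst' : (s \ t).Nonempty) :
    (s ∩ frontier t).Nonempty := by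
  by_contra hfr
  have hcover : s ⊆ interior t ∪ (closure t)ᶜ := fun x hx => by
    by_cases hxc : x ∈ closure t
    · exact Or.inl (by_contra fun hxi => hfr ⟨x, hx, hxc, hxi⟩)
    · exact Or.inr hxc
  obtain ⟨x, hxs, hxt⟩ := hst
  have hint : s ⊆ interior t :=
    hs.subset_left_of_subset_union isOpen_interior isClosed_closure.isOpen_compl
      (disjoint_compl_right.mono_left interior_subset_closure) hcover
      ⟨x, hxs, (hcover hxs).resolve_right (not_not.2 (subset_closure hxt))⟩
  obtain ⟨y, hys, hyt⟩ := hst'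
  exact hyt (interior_subset (hint hys))

theorem ofReal_integral_le_lintegral_ofReal {α : Type*} [MeasurableSpace α] {μ : Measure α}
    {f : α → ℝ} (hf : ∀ x, 0 ≤ f x) :
    ENNReal.ofReal (∫ x, f x ∂μ) ≤ ∫⁻ x, ENNReal.ofReal (f x) ∂μ := by
  refine ENNReal.ofReal_le_of_le_toReal ((le_abs_self _).trans ?_)
  simpa only [Real.norm_eq_abs, abs_of_nonneg (hf _)] using norm_integral_le_lintegral_norm f

theorem setAverage_le_of_lintegral_ofReal_le {α : Type*} [MeasurableSpace α] {μ : Measure α}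
    {s : Set α} {f : α → ℝ} {C : ℝ} (hC : 0 ≤ C) (hf : ∀ x, 0 ≤ f x) (hs : μ s ≠ ∞)
    (h : ∫⁻ x in s, ENNReal.ofReal (f x) ∂μ ≤ ENNReal.ofReal C * μ s) :
    ⨍ x in s, f x ∂μ ≤ C := by
  rw [setAverage_eq, smul_eq_mul]
  rcases eq_or_ne (μ s) 0 with h0 | h0
  · simp [h0, hC]
  have hint : ∫ x in s, f x ∂μ ≤ C * (μ s).toReal := by
    rw [← ENNReal.ofReal_le_ofReal_iff (by positivity), ENNReal.ofReal_mul hC,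
      ENNReal.ofReal_toReal hs]
    exact (ofReal_integral_le_lintegral_ofReal hf).trans h
  have hpos : 0 < (μ s).toReal := ENNReal.toReal_pos h0 hs
  calc (μ s).toReal⁻¹ * ∫ x in s, f x ∂μ ≤ (μ s).toReal⁻¹ * (C * (μ s).toReal) := by gcongr
    _ = C := by field_simp

theorem eq_zero_of_forall_le_ofReal_mul_mul {m M : ℝ≥0∞} (hM : M ≠ ∞) (A : ℝ)
    (h : ∀ α : ℝ, 0 < α → m ≤ ENNReal.ofReal (A * α) * M) : m = 0 := by
  have hlim : Filter.Tendsto (fun α : ℝ => ENNReal.ofReal (A * α) * M) (nhdsWithin 0 (Ioi 0))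
      (nhds 0) := by
    have hcont : Continuous fun α : ℝ => ENNReal.ofReal (A * α) * M :=
      (ENNReal.continuous_mul_const hM).comp
        (ENNReal.continuous_ofReal.comp (continuous_const_mul A))
    simpa using (hcont.tendsto 0).mono_left nhdsWithin_le_nhds
  exact nonpos_iff_eq_zero.1 (ge_of_tendsto hlim (eventually_nhdsWithin_of_forall h))

theorem exists_dyadic_layer {x R : ℝ} (hx : 0 < x) (hxR : x ≤ 2 * R) :
    ∃ k : ℕ, R / 2 ^ k < x ∧ x ≤ 2 * (R / 2 ^ k) := by
  obtain ⟨k, hk1, hk2⟩ := exists_nat_pow_near (x := 2 * R / x) (y := 2)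
    (by rwa [le_div_iff₀ hx, one_mul]) one_lt_two
  rw [le_div_iff₀ hx] at hk1
  rw [div_lt_iff₀ hx, pow_succ] at hk2
  refine ⟨k, ?_, ?_⟩
  · rw [div_lt_iff₀ (by positivity)]; linarith
  · rw [← mul_div_assoc, le_div_iff₀ (by positivity)]; linarith

theorem hasSum_succ_mul_half_pow : HasSum (fun k : ℕ => ((k : ℝ) + 1) * (1 / 2) ^ k) 4 := by
  have h := hasSum_choose_mul_geometric_of_norm_lt_one 1 (r := (1 / 2 : ℝ)) (by norm_num)
  norm_num at h
  exact h

variable {n : ℕ} {s : ℝ}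

theorem pdist_nonneg (z w : (Fin n → ℝ) × ℝ) : 0 ≤ pdist n s z w :=
  (norm_nonneg _).trans (le_max_left _ _)

theorem pdist_comm (z w : (Fin n → ℝ) × ℝ) : pdist n s z w = pdist n s w z := by
  rw [pdist, pdist, norm_sub_rev, abs_sub_comm]

theorem pdist_le_of_mem_segment (hs : 0 ≤ s) {z w p : (Fin n → ℝ) × ℝ}
    (hp : p ∈ segment ℝ z w) : pdist n s z p ≤ pdist n s z w := by
  rw [segment_eq_image'] at hp
  obtain ⟨t, ⟨ht0, ht1⟩, rfl⟩ := hp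
  have h1 : ‖z.1 - (z + t • (w - z)).1‖ ≤ ‖z.1 - w.1‖ := by
    rw [show z.1 - (z + t • (w - z)).1 = t • (z.1 - w.1) by
      simp only [Prod.fst_add, Prod.smul_fst, Prod.fst_sub]; module,
      norm_smul, Real.norm_of_nonneg ht0]
    exact mul_le_of_le_one_left (norm_nonneg _) ht1
  have h2 : |z.2 - (z + t • (w - z)).2| ≤ |z.2 - w.2| := by
    rw [show z.2 - (z + t • (w - z)).2 = t * (z.2 - w.2) by
      simp only [Prod.snd_add, Prod.smul_snd, Prod.snd_sub, smul_eq_mul]; ring,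
      abs_mul, abs_of_nonneg ht0]
    exact mul_le_of_le_one_left (abs_nonneg _) ht1
  exact max_le_max h1 (Real.rpow_le_rpow (abs_nonneg _) h2 (by positivity))

theorem pdistToSet_le (z : (Fin n → ℝ) × ℝ) {S : Set ((Fin n → ℝ) × ℝ)} {p : (Fin n → ℝ) × ℝ}
    (hp : p ∈ S) : pdistToSet n s z S ≤ pdist n s z p := by
  refine csInf_le ⟨0, ?_⟩ (mem_image_of_mem _ hp)
  rintro _ ⟨w, -, rfl⟩
  exact pdist_nonneg _ _

theorem pdistToSet_frontier_le_pdist (hs : 0 ≤ s) {S : Set ((Fin n → ℝ) × ℝ)}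
    {z w : (Fin n → ℝ) × ℝ} (hz : z ∈ S) (hw : w ∉ S) :
    pdistToSet n s z (frontier S) ≤ pdist n s z w := by
  obtain ⟨p, hpseg, hpfr⟩ := (convex_segment z w).isPreconnected.inter_frontier_nonempty
    ⟨z, left_mem_segment ℝ z w, hz⟩ ⟨w, right_mem_segment ℝ z w, hw⟩
  exact (pdistToSet_le z hpfr).trans (pdist_le_of_mem_segment hs hpseg)

variable {c : (Fin n → ℝ) × ℝ} {h : ℝ}

theorem isClosed_parCubeC (c : (Fin n → ℝ) × ℝ) (h : ℝ) : IsClosed (parCubeC n s c h) := by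
  simp only [parCubeC, ofPred_and, ofPred_forall]
  exact (isClosed_iInter fun i => isClosed_le (by fun_prop) continuous_const).inter
    (isClosed_le (by fun_prop) continuous_const)

theorem center_mem_parCubeC (hh : 0 ≤ h) : c ∈ parCubeC n s c h := by
  simp only [parCubeC, mem_ofPred_eq, sub_self, abs_zero]
  exact ⟨fun _ => by positivity, by positivity⟩

theorem parCubeC_mono (hs : 0 ≤ s) (hh : 0 ≤ h) {h' : ℝ} (hhh : h ≤ h') :
    parCubeC n s c h ⊆ parCubeC n s c h' := by
  rintro z ⟨h1, h2⟩
  refine ⟨fun i => (h1 i).trans (by linarith), h2.trans ?_⟩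
  gcongr

theorem pdist_le_of_mem_parCubeC (hs : 0 < s) (hh : 0 ≤ h) {z w : (Fin n → ℝ) × ℝ}
    (hz : z ∈ parCubeC n s c h) (hw : w ∈ parCubeC n s c h) : pdist n s z w ≤ h := by
  obtain ⟨hz1, hz2⟩ := hz
  obtain ⟨hw1, hw2⟩ := hw
  refine max_le ((pi_norm_le_iff_of_nonneg hh).2 fun i => ?_) ?_
  · rw [Pi.sub_apply, Real.norm_eq_abs]
    linarith [abs_sub_le (z.1 i) (c.1 i) (w.1 i), abs_sub_comm (c.1 i) (w.1 i), hz1 i, hw1 i]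
  · have habs : |z.2 - w.2| ≤ h ^ (2 * s) := by
      linarith [abs_sub_le z.2 c.2 w.2, abs_sub_comm c.2 w.2]
    calc |z.2 - w.2| ^ (1 / (2 * s)) ≤ (h ^ (2 * s)) ^ (1 / (2 * s)) := by gcongr
      _ = h := by rw [one_div, Real.rpow_rpow_inv hh (by positivity)]

theorem parCubeC_subset_pBall (hs : 0 < s) (hh : 0 ≤ h) {r : ℝ} (hr : h < r) :
    parCubeC n s c h ⊆ pBall n s c r := fun _ hw =>
  (pdist_le_of_mem_parCubeC hs hh hw (center_mem_parCubeC hh)).trans_lt hr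

theorem pdistToSet_frontier_parCubeC_le (hs : 0 < s) (hh : 0 ≤ h) {z : (Fin n → ℝ) × ℝ}
    (hz : z ∈ parCubeC n s c h) : pdistToSet n s z (frontier (parCubeC n s c h)) ≤ h := by
  have hne : parCubeC n s c h ≠ univ := fun hQ => by
    have := (hQ ▸ mem_univ (c.1, c.2 + h ^ (2 * s) + 1) : _ ∈ parCubeC n s c h).2
    rw [add_assoc, add_sub_cancel_left, abs_of_pos (by positivity)] at this
    linarith [Real.rpow_nonneg hh (2 * s)]
  obtain ⟨p, hp⟩ := nonempty_frontier_iff.2 ⟨⟨z, hz⟩, hne⟩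
  exact (pdistToSet_le z hp).trans
    (pdist_le_of_mem_parCubeC hs hh hz ((isClosed_parCubeC c h).frontier_subset hp))

def UpperParabolicGrowth (n : ℕ) (s : ℝ) (μ : Measure ((Fin n → ℝ) × ℝ)) : Prop :=
  ∀ (z : (Fin n → ℝ) × ℝ) (r : ℝ), 0 < r → μ (pBall n s z r) ≤ ENNReal.ofReal (r ^ (n + 1))

def SmallBoundary (n : ℕ) (s : ℝ) (μ : Measure ((Fin n → ℝ) × ℝ)) (c : (Fin n → ℝ) × ℝ)
    (h A : ℝ) : Prop :=
  ∀ α : ℝ, 0 < α →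
    μ {z ∈ parCubeC n s c (2 * h) | pdistToSet n s z (frontier (parCubeC n s c h)) ≤ α * h} ≤
      ENNReal.ofReal (A * α) * μ (parCubeC n s c (2 * h))

def pAnnulus (n : ℕ) (s : ℝ) (z : (Fin n → ℝ) × ℝ) (r : ℝ) : Set ((Fin n → ℝ) × ℝ) :=
  {w | r < pdist n s z w ∧ pdist n s z w ≤ 2 * r}

def cubeLayer (n : ℕ) (s : ℝ) (c : (Fin n → ℝ) × ℝ) (h : ℝ) (k : ℕ) :
    Set ((Fin n → ℝ) × ℝ) :=
  {z ∈ parCubeC n s c h | h / 2 ^ k < pdistToSet n s z (frontier (parCubeC n s c h)) ∧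
    pdistToSet n s z (frontier (parCubeC n s c h)) ≤ 2 * (h / 2 ^ k)}

variable {μ : Measure ((Fin n → ℝ) × ℝ)}

theorem measure_parCubeC_ne_top (hs : 0 < s) (hh : 0 ≤ h) (hgrow : UpperParabolicGrowth n s μ) :
    μ (parCubeC n s c h) ≠ ∞ :=
  ne_top_of_le_ne_top ENNReal.ofReal_ne_top
    ((measure_mono (parCubeC_subset_pBall hs hh (lt_add_one h))).trans
      (hgrow c (h + 1) (by positivity)))

theorem lintegral_pAnnulus_le (hgrow : UpperParabolicGrowth n s μ) (z : (Fin n → ℝ) × ℝ)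
    {r : ℝ} (hr : 0 < r) :
    ∫⁻ w in pAnnulus n s z r, ENNReal.ofReal ((pdist n s z w ^ (n + 1))⁻¹) ∂μ ≤
      ENNReal.ofReal (3 ^ (n + 1)) := by
  have hball : pAnnulus n s z r ⊆ pBall n s z (3 * r) := fun w hw => by
    rw [pBall, mem_ofPred_eq, pdist_comm]
    linarith [hw.2]
  calc ∫⁻ w in pAnnulus n s z r, ENNReal.ofReal ((pdist n s z w ^ (n + 1))⁻¹) ∂μ
      ≤ ∫⁻ _ in pAnnulus n s z r, ENNReal.ofReal ((r ^ (n + 1))⁻¹) ∂μ :=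
        setLIntegral_mono measurable_const fun w hw => ENNReal.ofReal_le_ofReal
          (inv_anti₀ (by positivity) (pow_le_pow_left₀ hr.le hw.1.le _))
    _ = ENNReal.ofReal ((r ^ (n + 1))⁻¹) * μ (pAnnulus n s z r) := setLIntegral_const _ _
    _ ≤ ENNReal.ofReal ((r ^ (n + 1))⁻¹) * ENNReal.ofReal ((3 * r) ^ (n + 1)) := by
        gcongr
        exact (measure_mono hball).trans (hgrow z _ (by positivity))
    _ = ENNReal.ofReal (3 ^ (n + 1)) := by
        rw [← ENNReal.ofReal_mul (by positivity), mul_pow]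
        field_simp

theorem diff_parCubeC_subset_iUnion_pAnnulus (hs : 0 < s) (hh : 0 < h)
    {z : (Fin n → ℝ) × ℝ} (hz : z ∈ parCubeC n s c h) {j : ℕ}
    (hd : h / 2 ^ j < pdistToSet n s z (frontier (parCubeC n s c h))) :
    parCubeC n s c (2 * h) \ parCubeC n s c h ⊆
      ⋃ k : Fin (j + 1), pAnnulus n s z (h / 2 ^ (k : ℕ)) := by
  rintro w ⟨hw₂, hw⟩
  have hlow : h / 2 ^ j < pdist n s z w := hd.trans_le (pdistToSet_frontier_le_pdist hs.le hz hw)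
  have hup : pdist n s z w ≤ 2 * h := pdist_le_of_mem_parCubeC hs (by positivity)
    (parCubeC_mono hs.le hh.le (by linarith) hz) hw₂
  obtain ⟨k, hk⟩ := exists_dyadic_layer ((by positivity : 0 < h / 2 ^ j).trans hlow) hup
  have hkj : k < j + 1 := by
    by_contra! hjk
    have : h / 2 ^ k ≤ h / 2 ^ (j + 1) :=
      div_le_div_of_nonneg_left hh.le (by positivity) (pow_le_pow_right₀ one_le_two hjk)
    have : 2 * (h / 2 ^ (j + 1)) = h / 2 ^ j := by rw [pow_succ]; field_simp
    linarith [hk.2]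
  exact mem_iUnion.2 ⟨⟨k, hkj⟩, hk⟩

theorem lintegral_diff_parCubeC_le (hs : 0 < s) (hh : 0 < h) (hgrow : UpperParabolicGrowth n s μ)
    {z : (Fin n → ℝ) × ℝ} (hz : z ∈ parCubeC n s c h) {j : ℕ}
    (hd : h / 2 ^ j < pdistToSet n s z (frontier (parCubeC n s c h))) :
    ∫⁻ w in parCubeC n s c (2 * h) \ parCubeC n s c h,
        ENNReal.ofReal ((pdist n s z w ^ (n + 1))⁻¹) ∂μ ≤
      ENNReal.ofReal (((j : ℝ) + 1) * 3 ^ (n + 1)) :=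
  calc ∫⁻ w in parCubeC n s c (2 * h) \ parCubeC n s c h,
        ENNReal.ofReal ((pdist n s z w ^ (n + 1))⁻¹) ∂μ
      ≤ ∑' k : Fin (j + 1), ∫⁻ w in pAnnulus n s z (h / 2 ^ (k : ℕ)),
          ENNReal.ofReal ((pdist n s z w ^ (n + 1))⁻¹) ∂μ :=
        (lintegral_mono_set (diff_parCubeC_subset_iUnion_pAnnulus hs hh hz hd)).trans
          (lintegral_iUnion_le _ _)
    _ ≤ ∑' _ : Fin (j + 1), ENNReal.ofReal (3 ^ (n + 1)) :=
        ENNReal.tsum_le_tsum fun _ => lintegral_pAnnulus_le hgrow z (by positivity)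
    _ = ENNReal.ofReal (((j : ℝ) + 1) * 3 ^ (n + 1)) := by
        rw [tsum_fintype, Finset.sum_const, Finset.card_univ, Fintype.card_fin, nsmul_eq_mul,
          ENNReal.ofReal_mul (by positivity)]
        norm_cast

theorem parCubeC_subset_union_cubeLayer (hs : 0 < s) (hh : 0 ≤ h) :
    parCubeC n s c h ⊆ {z ∈ parCubeC n s c h | pdistToSet n s z (frontier (parCubeC n s c h)) ≤ 0}
      ∪ ⋃ k, cubeLayer n s c h k := by
  intro z hz
  rcases le_or_gt (pdistToSet n s z (frontier (parCubeC n s c h))) 0 with hz₀ | hz₀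
  · exact Or.inl ⟨hz, hz₀⟩
  · obtain ⟨k, hk⟩ := exists_dyadic_layer (R := h) hz₀
      ((pdistToSet_frontier_parCubeC_le hs hh hz).trans (by linarith))
    exact Or.inr (mem_iUnion.2 ⟨k, hz, hk⟩)

theorem SmallBoundary.measure_near_frontier_le {A : ℝ} (hbd : SmallBoundary n s μ c h A)
    (hs : 0 ≤ s) (hh : 0 ≤ h) {α : ℝ} (hα : 0 < α) :
    μ {z ∈ parCubeC n s c h | pdistToSet n s z (frontier (parCubeC n s c h)) ≤ α * h} ≤
      ENNReal.ofReal (A * α) * μ (parCubeC n s c (2 * h)) := by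
  refine (measure_mono ?_).trans (hbd α hα)
  exact fun _ hz => ⟨parCubeC_mono hs hh (by linarith) hz.1, hz.2⟩

theorem measure_pdistToSet_frontier_nonpos (hs : 0 < s) (hh : 0 < h)
    (hgrow : UpperParabolicGrowth n s μ) {A : ℝ} (hbd : SmallBoundary n s μ c h A) :
    μ {z ∈ parCubeC n s c h | pdistToSet n s z (frontier (parCubeC n s c h)) ≤ 0} = 0 := by
  refine eq_zero_of_forall_le_ofReal_mul_mul (measure_parCubeC_ne_top hs (by positivity) hgrow) A
    fun _ hα => (measure_mono ?_).trans (hbd.measure_near_frontier_le hs.le hh.le hα)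
  exact fun _ hz => ⟨hz.1, hz.2.trans (by positivity)⟩

theorem setLIntegral_cubeLayer_le (hs : 0 < s) (hh : 0 < h) (hgrow : UpperParabolicGrowth n s μ)
    {A : ℝ} (hbd : SmallBoundary n s μ c h A) (k : ℕ) :
    ∫⁻ z in cubeLayer n s c h k, ∫⁻ w in parCubeC n s c (2 * h) \ parCubeC n s c h,
        ENNReal.ofReal ((pdist n s z w ^ (n + 1))⁻¹) ∂μ ∂μ ≤
      ENNReal.ofReal (((k : ℝ) + 1) * (1 / 2) ^ k * (2 * A * 3 ^ (n + 1))) *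
        μ (parCubeC n s c (2 * h)) :=
  calc _ ≤ ∫⁻ _ in cubeLayer n s c h k, ENNReal.ofReal (((k : ℝ) + 1) * 3 ^ (n + 1)) ∂μ :=
        setLIntegral_mono measurable_const fun z hz =>
          lintegral_diff_parCubeC_le hs hh hgrow hz.1 hz.2.1
    _ = ENNReal.ofReal (((k : ℝ) + 1) * 3 ^ (n + 1)) * μ (cubeLayer n s c h k) :=
        setLIntegral_const _ _
    _ ≤ ENNReal.ofReal (((k : ℝ) + 1) * 3 ^ (n + 1)) *
          (ENNReal.ofReal (A * (2 / 2 ^ k)) * μ (parCubeC n s c (2 * h))) := by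
        gcongr
        refine (measure_mono fun z hz => ?_).trans
          (hbd.measure_near_frontier_le hs.le hh.le (by positivity))
        exact ⟨hz.1, by linarith [hz.2.2, show 2 * (h / 2 ^ k) = 2 / 2 ^ k * h by ring]⟩
    _ = _ := by
        rw [← mul_assoc, ← ENNReal.ofReal_mul (by positivity), one_div_pow]
        ring_nf

theorem lintegral_parCubeC_lintegral_le (hs : 0 < s) (hh : 0 < h) {A : ℝ} (hA : 0 ≤ A)
    (hgrow : UpperParabolicGrowth n s μ) (hbd : SmallBoundary n s μ c h A) :
    ∫⁻ z in parCubeC n s c h, ∫⁻ w in parCubeC n s c (2 * h) \ parCubeC n s c h,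
        ENNReal.ofReal ((pdist n s z w ^ (n + 1))⁻¹) ∂μ ∂μ ≤
      ENNReal.ofReal (8 * A * 3 ^ (n + 1)) * μ (parCubeC n s c (2 * h)) := by
  set L := fun z => ∫⁻ w in parCubeC n s c (2 * h) \ parCubeC n s c h,
    ENNReal.ofReal ((pdist n s z w ^ (n + 1))⁻¹) ∂μ
  set Q₀ := {z ∈ parCubeC n s c h | pdistToSet n s z (frontier (parCubeC n s c h)) ≤ 0}
  have hsum := hasSum_succ_mul_half_pow.mul_right (2 * A * 3 ^ (n + 1))
  calc ∫⁻ z in parCubeC n s c h, L z ∂μ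
      ≤ ∫⁻ z in Q₀, L z ∂μ + ∫⁻ z in ⋃ k, cubeLayer n s c h k, L z ∂μ :=
        (lintegral_mono_set (parCubeC_subset_union_cubeLayer hs hh.le)).trans
          (lintegral_union_le _ _ _)
    _ ≤ ∑' k, ∫⁻ z in cubeLayer n s c h k, L z ∂μ := by
        rw [setLIntegral_measure_zero _ _ (measure_pdistToSet_frontier_nonpos hs hh hgrow hbd),
          zero_add]
        exact lintegral_iUnion_le _ _
    _ ≤ ∑' k : ℕ, ENNReal.ofReal (((k : ℝ) + 1) * (1 / 2) ^ k * (2 * A * 3 ^ (n + 1))) *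
          μ (parCubeC n s c (2 * h)) :=
        ENNReal.tsum_le_tsum (setLIntegral_cubeLayer_le hs hh hgrow hbd)
    _ = ENNReal.ofReal (8 * A * 3 ^ (n + 1)) * μ (parCubeC n s c (2 * h)) := by
        rw [ENNReal.tsum_mul_right, ← ENNReal.ofReal_tsum_of_nonneg (fun k => by positivity)
          hsum.summable, hsum.tsum_eq]
        ring_nf

theorem stmt_11_general (n : ℕ) (s : ℝ) (hs : 1 / 2 < s) (A : ℝ) (hA : 0 < A) :
    ∃ C : ℝ, 0 < C ∧
      ∀ (μ : Measure ((Fin n → ℝ) × ℝ)) (c : (Fin n → ℝ) × ℝ) (h : ℝ), 0 < h →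
        (∀ (z : (Fin n → ℝ) × ℝ) (r : ℝ), 0 < r →
          μ (pBall n s z r) ≤ ENNReal.ofReal (r ^ (n + 1))) →
        (∀ α : ℝ, 0 < α →
          μ {z ∈ parCubeC n s c (2 * h) |
              pdistToSet n s z (frontier (parCubeC n s c h)) ≤ α * h} ≤
            ENNReal.ofReal (A * α) * μ (parCubeC n s c (2 * h))) →
        μ (parCubeC n s c (2 * h)) ≤ 3 ^ (n + 2) * μ (parCubeC n s c h) →
        ⨍ z in parCubeC n s c h,
            (∫ w in parCubeC n s c (2 * h) \ parCubeC n s c h,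
              (pdist n s z w ^ (n + 1))⁻¹ ∂μ) ∂μ ≤ C := by
  refine ⟨8 * A * 3 ^ (n + 1) * 3 ^ (n + 2), by positivity, fun μ c h hh hgrow hbd hdbl => ?_⟩
  have hs₀ : 0 < s := by linarith
  have hkernel : ∀ z w, 0 ≤ (pdist n s z w ^ (n + 1))⁻¹ := fun z w =>
    inv_nonneg.2 (pow_nonneg (pdist_nonneg z w) _)
  refine setAverage_le_of_lintegral_ofReal_le (by positivity)
    (fun z => integral_nonneg (hkernel z)) (measure_parCubeC_ne_top hs₀ hh.le hgrow) ?_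
  calc _ ≤ ∫⁻ z in parCubeC n s c h, ∫⁻ w in parCubeC n s c (2 * h) \ parCubeC n s c h,
          ENNReal.ofReal ((pdist n s z w ^ (n + 1))⁻¹) ∂μ ∂μ :=
        lintegral_mono fun z => ofReal_integral_le_lintegral_ofReal (hkernel z)
    _ ≤ ENNReal.ofReal (8 * A * 3 ^ (n + 1)) * μ (parCubeC n s c (2 * h)) :=
        lintegral_parCubeC_lintegral_le hs₀ hh hA.le hgrow hbd
    _ ≤ ENNReal.ofReal (8 * A * 3 ^ (n + 1)) * (3 ^ (n + 2) * μ (parCubeC n s c h)) := by gcongr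
    _ = ENNReal.ofReal (8 * A * 3 ^ (n + 1) * 3 ^ (n + 2)) * μ (parCubeC n s c h) := by
        rw [ENNReal.ofReal_mul (p := 8 * A * 3 ^ (n + 1)) (by positivity),
          ENNReal.ofReal_pow (by norm_num), ENNReal.ofReal_ofNat]
        ring

/-- If `μ` has upper `s`-parabolic growth of degree `n+1` with constant `1`, and `Q̂` is an
`s`-parabolic cube with `A`-small boundary which is `(2, 3^{n+2})`-doubling, then
`(1/μ(Q̂)) ∫_{Q̂} ∫_{2Q̂∖Q̂} |x̄ - ȳ|_{p_s}^{-(n+1)} dμ(ȳ) dμ(x̄) ≤ C(n,s,A)`. -/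
theorem stmt_11 (n : ℕ) (s : ℝ) (hs : 1 / 2 < s) (hs1 : s ≤ 1) (A : ℝ) (hA : 0 < A) :
    ∃ C : ℝ, 0 < C ∧
      ∀ (μ : Measure ((Fin n → ℝ) × ℝ)) (c : (Fin n → ℝ) × ℝ) (h : ℝ), 0 < h →
        (∀ (z : (Fin n → ℝ) × ℝ) (r : ℝ), 0 < r →
          μ (pBall n s z r) ≤ ENNReal.ofReal (r ^ (n + 1))) →
        (∀ α : ℝ, 0 < α →
          μ {z ∈ parCubeC n s c (2 * h) |
              pdistToSet n s z (frontier (parCubeC n s c h)) ≤ α * h} ≤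
            ENNReal.ofReal (A * α) * μ (parCubeC n s c (2 * h))) →
        μ (parCubeC n s c (2 * h)) ≤ 3 ^ (n + 2) * μ (parCubeC n s c h) →
        ⨍ z in parCubeC n s c h,
            (∫ w in parCubeC n s c (2 * h) \ parCubeC n s c h,
              (pdist n s z w ^ (n + 1))⁻¹ ∂μ) ∂μ ≤ C :=
  stmt_11_general n s hs A hA
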